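/- Let v ∈ 𝓕 be a basis vector given by a semi-infinite monomial of charge m. Then ψ(j)∘ψ*(j)(v) = 0 for all but finitely many integers j > 0, ψ*(j)∘ψ(j)(v) = 0 for all but finitely many integers j ≤ 0, and the resulting finite sum satisfies Σ_{j>0} ψ(j)ψ*(j)(v) − Σ_{j≤0} ψ*(j)ψ(j)(v) = m·v. In other words, the normally ordered charge operator p(0) = Σ_{j>0} ψ(j)ψ*(j) − Σ_{j≤0} ψ*(j)ψ(j) acts on the charge-m subspace 𝓕(m) as multiplication by m. -/

import Mathlib

open scoped Classical

/-- A semi-infinite monomial: a strictly decreasing sequence `i : ℕ → ℤ`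
(written `i₀ > i₁ > i₂ > ⋯`) such that `i n = m - n` for all sufficiently
large `n`, for some integer `m` (the charge). -/
structure SIM : Type where
  seq : ℕ → ℤ
  strictAnti : StrictAnti seq
  charge_exists : ∃ m : ℤ, ∃ N : ℕ, ∀ n ≥ N, seq n = m - n

namespace SIM

/-- `v` has charge `m` if `v n = m - n` for all sufficiently large `n`. -/
def HasCharge (v : SIM) (m : ℤ) : Prop :=
  ∃ N : ℕ, ∀ n ≥ N, v.seq n = m - n

/-- The charge of a semi-infinite monomial. -/
noncomputable def charge (v : SIM) : ℤ := v.charge_exists.choose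

theorem exists_seq_lt (v : SIM) (k : ℤ) : ∃ n, v.seq n < k := by
  obtain ⟨m, N, hN⟩ := v.charge_exists
  refine ⟨max N (m - k + 1).toNat, ?_⟩
  rw [hN _ (le_max_left _ _)]
  have h1 : (m - k + 1).toNat ≤ max N (m - k + 1).toNat := le_max_right _ _
  omega

/-- The position at which `k` is inserted into `v`: the number of entries of `v`
that are greater than `k` (assuming `k` does not occur in `v`). -/
noncomputable def insIdx (v : SIM) (k : ℤ) : ℕ := sInf {n : ℕ | v.seq n < k}

/-- The monomial obtained from `v` by inserting the entry `k`
(meaningful when `k` does not occur among the entries of `v`; in the unused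
case where `k` does occur we simply return `v`). -/
noncomputable def insert (v : SIM) (k : ℤ) : SIM :=
  if h : k ∈ Set.range v.seq then v
  else
    { seq := fun n =>
        if n < v.insIdx k then v.seq n else if n = v.insIdx k then k else v.seq (n - 1)
      strictAnti := by
        have hs : v.seq (v.insIdx k) < k := Nat.sInf_mem (v.exists_seq_lt k)
        have hgt : ∀ n, n < v.insIdx k → k < v.seq n := by
          intro n hn
          have h1 : ¬ v.seq n < k := Nat.notMem_of_lt_sInf hn
          have h2 : v.seq n ≠ k := fun hh => h ⟨n, hh⟩
          omega
        apply strictAnti_nat_of_succ_lt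
        intro n

        rcases lt_trichotomy (n + 1) (v.insIdx k) with h1 | h1 | h1
        · rw [if_pos h1, if_pos (by omega)]
          exact v.strictAnti (Nat.lt_succ_self n)
        · rw [if_neg (by omega), if_pos h1, if_pos (by omega)]
          exact hgt n (by omega)
        · rw [if_neg (by omega), if_neg (by omega)]
          rcases eq_or_lt_of_le (Nat.le_of_lt_succ h1) with h2 | h2
          · rw [if_neg (by omega), if_pos h2.symm]
            simpa [← h2] using hs
          · rw [if_neg (by omega), if_neg (by omega)]
            exact v.strictAnti (by omega)
      charge_exists := by
        obtain ⟨m, N, hN⟩ := v.charge_exists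
        refine ⟨m + 1, max N (v.insIdx k) + 1, fun n hn => ?_⟩

        beta_reduce
        rw [if_neg (by omega), if_neg (by omega), hN (n - 1) (by omega)]
        omega }

/-- The position of the entry `k` in `v` (assuming `k` occurs in `v`). -/
noncomputable def delIdx (v : SIM) (k : ℤ) : ℕ := sInf {n : ℕ | v.seq n ≤ k}

/-- The monomial obtained from `v` by deleting the entry `k`
(meaningful when `k` occurs among the entries of `v`). -/
noncomputable def delete (v : SIM) (k : ℤ) : SIM where
  seq n := if n < v.delIdx k then v.seq n else v.seq (n + 1)
  strictAnti := by
    apply strictAnti_nat_of_succ_lt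
    intro n

    split_ifs <;> exact v.strictAnti (by omega)
  charge_exists := by
    obtain ⟨m, N, hN⟩ := v.charge_exists
    refine ⟨m - 1, max N (v.delIdx k), fun n hn => ?_⟩

    beta_reduce
    rw [if_neg (by omega), hN (n + 1) (by omega)]
    omega

end SIM

/-- The fermionic Fock space: the free ℂ-vector space on the set of all
semi-infinite monomials (of all charges). -/
abbrev Fock : Type := SIM →₀ ℂ

/-- The wedging operator `ψ(k)`: it sends a basis monomial `i₀ > i₁ > ⋯` to `0`
if `k = i_s` for some `s`, and otherwise to `(−1)^s` times the basis monomial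
obtained by inserting `k`, where `s` is the number of entries greater
than `k`. -/
noncomputable def psi (k : ℤ) : Fock →ₗ[ℂ] Fock :=
  Finsupp.lsum ℂ fun v =>
    if k ∈ Set.range v.seq then 0
    else ((-1 : ℂ) ^ v.insIdx k) • Finsupp.lsingle (v.insert k)

/-- The contracting operator `ψ*(k)`: it sends a basis monomial `i₀ > i₁ > ⋯`
to `(−1)^s` times the basis monomial obtained by deleting `i_s` if `k = i_s`,
and to `0` if `k` does not occur among the entries. -/
noncomputable def psiStar (k : ℤ) : Fock →ₗ[ℂ] Fock :=
  Finsupp.lsum ℂ fun v =>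
    if k ∈ Set.range v.seq then ((-1 : ℂ) ^ v.delIdx k) • Finsupp.lsingle (v.delete k)
    else 0

/-!
`ψ(j)ψ*(j)` and `ψ*(j)ψ(j)` act on a monomial as the projections onto "contains `j`" and
"does not contain `j`": deleting and re-inserting `j` happen at the same position, so the
two signs cancel. Hence the left-hand side is `(#particles - #holes) • v`, where the particles
are the entries `j > 0` of `v` and the holes the `j ≤ 0` missing from `v`. Below some `c ≤ 0`
the monomial is the full Dirac sea, and its `m - c` entries above `c` give
`#particles - #holes = m`.
-/

open Finset

theorem card_filter_pos_sub_card_Ioc_sdiff {S : Finset ℤ} {c : ℤ} (hc : c ≤ 0)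
    (hS : ∀ j ∈ S, c < j) :
    (#(S.filter (0 < ·)) : ℤ) - #(Ioc c 0 \ S) = #S + c := by
  have hsplit := S.card_filter_add_card_filter_not (0 < ·)
  have hinter : Ioc c 0 ∩ S = S.filter (¬ 0 < ·) := by
    ext j
    simp only [mem_inter, mem_Ioc, mem_filter, not_lt]
    exact ⟨fun h => ⟨h.2, h.1.2⟩, fun h => ⟨⟨hS j h.1, h.2⟩, h.1⟩⟩
  have hIoc := card_sdiff_add_card_inter (Ioc c 0) S
  rw [hinter, Int.card_Ioc] at hIoc
  omega

theorem finsum_mem_ite_eq_ncard_smul {α M : Type*} [AddCommMonoid M] {s : Set α}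
    {p : α → Prop} [DecidablePred p] (hsp : {a ∈ s | p a}.Finite) (x : M) :
    ∑ᶠ a ∈ s, (if p a then x else 0) = {a ∈ s | p a}.ncard • x := by
  rw [← hsp.coe_toFinset, Set.ncard_coe_finset, ← sum_const,
    finsum_mem_eq_sum_of_inter_support_eq _ (t := hsp.toFinset)]
  · exact sum_congr rfl fun a ha => if_pos (hsp.mem_toFinset.1 ha).2
  · ext a
    simp only [Set.mem_inter_iff, Set.Finite.coe_toFinset, Set.mem_ofPred_eq,
      Function.mem_support, ne_eq, ite_eq_right_iff, not_forall]
    tauto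

namespace SIM

theorem ext {v w : SIM} (h : v.seq = w.seq) : v = w := by
  cases v; cases w; subst h; rfl

variable (v : SIM) {j : ℤ}

theorem delIdx_seq (s : ℕ) : v.delIdx (v.seq s) = s :=
  IsLeast.csInf_eq ⟨le_refl (v.seq s), fun _ hn => v.strictAnti.le_iff_ge.1 hn⟩

theorem seq_delIdx (h : j ∈ Set.range v.seq) : v.seq (v.delIdx j) = j := by
  obtain ⟨s, rfl⟩ := h
  rw [v.delIdx_seq]

theorem delete_seq (n : ℕ) :
    (v.delete j).seq n = if n < v.delIdx j then v.seq n else v.seq (n + 1) := rfl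

theorem notMem_range_delete (h : j ∈ Set.range v.seq) : j ∉ Set.range (v.delete j).seq := by
  obtain ⟨s, rfl⟩ := h
  rintro ⟨n, hn⟩
  rw [v.delete_seq, v.delIdx_seq] at hn
  split_ifs at hn with hlt
  · exact hlt.ne (v.strictAnti.injective hn)
  · exact hlt (by rw [← v.strictAnti.injective hn]; omega)

theorem insIdx_delete (h : j ∈ Set.range v.seq) : (v.delete j).insIdx j = v.delIdx j := by
  obtain ⟨s, rfl⟩ := h
  rw [v.delIdx_seq]
  refine IsLeast.csInf_eq ⟨?_, fun n hn => ?_⟩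
  · change (v.delete _).seq s < _
    rw [v.delete_seq, v.delIdx_seq, if_neg (lt_irrefl s)]
    exact v.strictAnti s.lt_succ_self
  · by_contra hlt
    change (v.delete _).seq n < _ at hn
    rw [v.delete_seq, v.delIdx_seq, if_pos (not_le.1 hlt)] at hn
    exact hlt (v.strictAnti.lt_iff_gt.1 hn).le

theorem insert_seq (h : j ∉ Set.range v.seq) (n : ℕ) :
    (v.insert j).seq n =
      if n < v.insIdx j then v.seq n else if n = v.insIdx j then j else v.seq (n - 1) := by
  rw [SIM.insert, dif_neg h]

theorem insert_delete (h : j ∈ Set.range v.seq) : (v.delete j).insert j = v := by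
  refine ext (funext fun n => ?_)
  rw [insert_seq _ (v.notMem_range_delete h), v.insIdx_delete h]
  rcases lt_trichotomy n (v.delIdx j) with hlt | rfl | hgt
  · rw [if_pos hlt, v.delete_seq, if_pos hlt]
  · rw [if_neg (lt_irrefl _), if_pos rfl, v.seq_delIdx h]
  · rw [if_neg (by omega), if_neg (by omega), v.delete_seq, if_neg (by omega),
      Nat.sub_add_cancel (by omega)]

theorem lt_seq_of_lt_insIdx (h : j ∉ Set.range v.seq) {n : ℕ} (hn : n < v.insIdx j) :
    j < v.seq n :=
  lt_of_le_of_ne (not_lt.1 (Nat.notMem_of_lt_sInf hn)) fun hj => h ⟨n, hj.symm⟩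

theorem seq_insIdx_eq (h : j ∉ Set.range v.seq) : (v.insert j).seq (v.insIdx j) = j := by
  rw [v.insert_seq h, if_neg (lt_irrefl _), if_pos rfl]

theorem mem_range_insert (h : j ∉ Set.range v.seq) : j ∈ Set.range (v.insert j).seq :=
  ⟨_, v.seq_insIdx_eq h⟩

theorem delIdx_insert (h : j ∉ Set.range v.seq) : (v.insert j).delIdx j = v.insIdx j := by
  refine IsLeast.csInf_eq ⟨(v.seq_insIdx_eq h).le, fun n hn => ?_⟩
  by_contra hlt
  change (v.insert j).seq n ≤ j at hn
  rw [v.insert_seq h, if_pos (not_le.1 hlt)] at hn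
  exact not_le.2 (v.lt_seq_of_lt_insIdx h (not_le.1 hlt)) hn

theorem delete_insert (h : j ∉ Set.range v.seq) : (v.insert j).delete j = v := by
  refine ext (funext fun n => ?_)
  rw [delete_seq, v.delIdx_insert h]
  by_cases hlt : n < v.insIdx j
  · rw [if_pos hlt, v.insert_seq h, if_pos hlt]
  · rw [if_neg hlt, v.insert_seq h, if_neg (by omega), if_neg (by omega), Nat.add_sub_cancel]

def particles (v : SIM) : Set ℤ := {j | 0 < j ∧ j ∈ Set.range v.seq}

def holes (v : SIM) : Set ℤ := {j | j ≤ 0 ∧ j ∉ Set.range v.seq}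

variable {v} {m : ℤ}

theorem HasCharge.exists_range_eq (hv : v.HasCharge m) :
    ∃ c ≤ 0, ∃ S : Finset ℤ, (∀ j ∈ S, c < j) ∧ (#S : ℤ) = m - c ∧
      Set.range v.seq = ↑S ∪ Set.Iic c := by
  obtain ⟨N₀, hN₀⟩ := hv
  set N := max N₀ m.toNat
  have hN : ∀ n ≥ N, v.seq n = m - n := fun n hn => hN₀ n (le_of_max_le_left hn)
  have hmN : m.toNat ≤ N := le_max_right _ _
  refine ⟨m - N, by omega, (range N).image v.seq, ?_, ?_, ?_⟩
  · simp only [mem_image, mem_range]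
    rintro _ ⟨n, hn, rfl⟩
    exact hN N le_rfl ▸ v.strictAnti hn
  · rw [card_image_of_injective _ v.strictAnti.injective, card_range]
    ring
  · ext j
    simp only [Set.mem_range, Set.mem_union, coe_image, coe_range, Set.mem_image, Set.mem_Iio,
      Set.mem_Iic]
    constructor
    · rintro ⟨n, rfl⟩
      by_cases hn : n < N
      · exact Or.inl ⟨n, hn, rfl⟩
      · rw [hN n (not_lt.1 hn)]
        omega
    · rintro (⟨n, -, rfl⟩ | hj)
      · exact ⟨n, rfl⟩
      · exact ⟨(m - j).toNat, by rw [hN _ (by omega)]; omega⟩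

theorem HasCharge.exists_particles_holes_eq (hv : v.HasCharge m) :
    ∃ c ≤ 0, ∃ S : Finset ℤ, (∀ j ∈ S, c < j) ∧ (#S : ℤ) = m - c ∧
      v.particles = ↑(S.filter (0 < ·)) ∧ v.holes = ↑(Ioc c 0 \ S) := by
  obtain ⟨c, hc, S, hS, hcard, hrange⟩ := hv.exists_range_eq
  refine ⟨c, hc, S, hS, hcard, ?_, ?_⟩ <;> ext j <;>
    simp only [particles, holes, hrange, Set.mem_ofPred_eq, Set.mem_union, Set.mem_Iic, mem_coe,
      mem_filter, mem_sdiff, mem_Ioc, not_or, not_le]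
  · exact ⟨fun ⟨hj, h⟩ => ⟨h.resolve_right (by omega), hj⟩,
      fun ⟨h, hj⟩ => ⟨hj, .inl h⟩⟩
  · tauto

theorem HasCharge.finite_particles (hv : v.HasCharge m) : v.particles.Finite := by
  obtain ⟨c, -, S, -, -, hp, -⟩ := hv.exists_particles_holes_eq
  exact hp ▸ finite_toSet _

theorem HasCharge.finite_holes (hv : v.HasCharge m) : v.holes.Finite := by
  obtain ⟨c, -, S, -, -, -, hh⟩ := hv.exists_particles_holes_eq
  exact hh ▸ finite_toSet _

theorem HasCharge.ncard_particles_sub_ncard_holes (hv : v.HasCharge m) :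
    (v.particles.ncard : ℤ) - v.holes.ncard = m := by
  obtain ⟨c, hc, S, hS, hcard, hp, hh⟩ := hv.exists_particles_holes_eq
  rw [hp, hh, Set.ncard_coe_finset, Set.ncard_coe_finset,
    card_filter_pos_sub_card_Ioc_sdiff hc hS, hcard, sub_add_cancel]

end SIM

theorem psi_single (j : ℤ) (v : SIM) :
    psi j (Finsupp.single v 1) = if j ∈ Set.range v.seq then 0
      else ((-1 : ℂ) ^ v.insIdx j) • Finsupp.single (v.insert j) 1 := by
  rw [psi, Finsupp.lsum_single]
  split_ifs <;> rfl

theorem psiStar_single (j : ℤ) (v : SIM) :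
    psiStar j (Finsupp.single v 1) = if j ∈ Set.range v.seq then
      ((-1 : ℂ) ^ v.delIdx j) • Finsupp.single (v.delete j) 1 else 0 := by
  rw [psiStar, Finsupp.lsum_single]
  split_ifs <;> rfl

theorem neg_one_pow_smul_neg_one_pow_smul {R M : Type*} [Ring R] [AddCommMonoid M] [Module R M]
    (d : ℕ) (x : M) : ((-1 : R) ^ d) • ((-1 : R) ^ d) • x = x := by
  rw [smul_smul, ← pow_add, Even.neg_one_pow ⟨d, rfl⟩, one_smul]

theorem psi_psiStar_single (j : ℤ) (v : SIM) :
    psi j (psiStar j (Finsupp.single v 1)) =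
      if j ∈ Set.range v.seq then Finsupp.single v 1 else 0 := by
  rw [psiStar_single]
  split_ifs with h
  · rw [map_smul, psi_single, if_neg (v.notMem_range_delete h), v.insIdx_delete h,
      v.insert_delete h, neg_one_pow_smul_neg_one_pow_smul]
  · exact map_zero _

theorem psiStar_psi_single (j : ℤ) (v : SIM) :
    psiStar j (psi j (Finsupp.single v 1)) =
      if j ∉ Set.range v.seq then Finsupp.single v 1 else 0 := by
  rw [psi_single]
  split_ifs with h
  · exact map_zero _
  · rw [map_smul, psiStar_single, if_pos (v.mem_range_insert h), v.delIdx_insert h,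
      v.delete_insert h, neg_one_pow_smul_neg_one_pow_smul]

/-- Let `v` be a basis vector of `𝓕` given by a semi-infinite monomial of
charge `m`.  Then `ψ(j)∘ψ*(j)(v) = 0` for all but finitely many `j > 0`,
`ψ*(j)∘ψ(j)(v) = 0` for all but finitely many `j ≤ 0`, and
`Σ_{j>0} ψ(j)ψ*(j)(v) − Σ_{j≤0} ψ*(j)ψ(j)(v) = m·v`: the normally ordered
charge operator `p(0)` acts on `𝓕(m)` as multiplication by `m`. -/
theorem charge_operator_eq_charge_smul (m : ℤ) (v : SIM) (hv : v.HasCharge m) :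
    {j : ℤ | 0 < j ∧ psi j (psiStar j (Finsupp.single v 1)) ≠ 0}.Finite ∧
    {j : ℤ | j ≤ 0 ∧ psiStar j (psi j (Finsupp.single v 1)) ≠ 0}.Finite ∧
    (∑ᶠ j ∈ {j : ℤ | 0 < j}, psi j (psiStar j (Finsupp.single v 1))) -
      (∑ᶠ j ∈ {j : ℤ | j ≤ 0}, psiStar j (psi j (Finsupp.single v 1))) =
      (m : ℂ) • Finsupp.single v 1 := by
  simp only [psi_psiStar_single, psiStar_psi_single, ne_eq, ite_eq_right_iff,
    Finsupp.single_eq_zero, one_ne_zero, imp_false, not_not]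
  refine ⟨hv.finite_particles, hv.finite_holes, ?_⟩
  rw [finsum_mem_ite_eq_ncard_smul (s := {j | 0 < j}) hv.finite_particles,
    finsum_mem_ite_eq_ncard_smul (s := {j | j ≤ 0}) hv.finite_holes,
    ← Nat.cast_smul_eq_nsmul ℂ, ← Nat.cast_smul_eq_nsmul ℂ, ← sub_smul,
    ← hv.ncard_particles_sub_ncard_holes]
  push_cast
  rfl
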